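/- arXiv:2208.14373 — 2 statements merged into one kernel-verified Lean document; each statement's English description precedes it below -/
import Mathlib

section
/- Explicit formula for the transformation matrix, general case: Let α', α > 0 and u', u ∈ ℝ with α ≠ α' and u ≠ u', and set a := α/α', b := (u−u')/α', K_{n,m} := 2^{(m−n)/2}·(m!)^{−1/2}·(n!)^{1/2}. Then for all n, m ∈ ℕ with n ≥ m, ℙ_{n,m} = K_{n,m}·a^{−(m+1)}·Σ_{k=m, k−m even}^{n} [1/((n−k)!·((k−m)/2)!)]·(−2b/a)^{n−k}·(1/a² − 1)^{(k−m)/2}, where the sum ranges over integers k with m ≤ k ≤ n and k−m even. -/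
open MeasureTheory Real Finset

/-- Physicists' Hermite polynomials: `H 0 x = 1`, `H 1 x = 2x`,
`H (n+1) x = 2x · H n x − 2n · H (n−1) x`. -/
noncomputable def physHermite : ℕ → ℝ → ℝ
  | 0 => fun _ => 1
  | 1 => fun x => 2 * x
  | (n + 2) => fun x => 2 * x * physHermite (n + 1) x - 2 * ((n : ℝ) + 1) * physHermite n x

/-- Asymmetrically weighted Hermite function
`ψ_n^{α,u}(v) = (π·2^n·n!)^{-1/2} · H_n((v−u)/α) · exp(−((v−u)/α)²)`. -/
noncomputable def awHermite (α u : ℝ) (n : ℕ) (v : ℝ) : ℝ :=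
  (Real.sqrt (Real.pi * 2 ^ n * (n.factorial : ℝ)))⁻¹ * physHermite n ((v - u) / α) *
    Real.exp (-((v - u) / α) ^ 2)

/-- The weight `ω(v) = √π · α⁻¹ · exp(((v−u)/α)²)`. -/
noncomputable def hermiteWeight (α u : ℝ) (v : ℝ) : ℝ :=
  Real.sqrt Real.pi * α⁻¹ * Real.exp (((v - u) / α) ^ 2)

/-- Transformation matrix entries `ℙ_{n,m} = ∫ ψ_m^{α',u'}(v) · ψ_n^{α,u}(v) · ω(v) dv`. -/
noncomputable def transferMatrix (α' u' α u : ℝ) (n m : ℕ) : ℝ :=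
  ∫ v : ℝ, awHermite α' u' m v * awHermite α u n v * hermiteWeight α u v

/-- The coefficient `K_{n,m} = 2^{(m−n)/2} · (m!)^{−1/2} · (n!)^{1/2}`. -/
noncomputable def Kcoef (n m : ℕ) : ℝ :=
  (2 : ℝ) ^ (((m : ℝ) - (n : ℝ)) / 2) * (Real.sqrt (m.factorial : ℝ))⁻¹ *
    Real.sqrt (n.factorial : ℝ)

/-!
Substituting `v = α' w + u'` turns `ℙ_{n,m}` into a multiple of
`∫ H_m(w) H_n((w - b)/a) e^{-w²} dw`. Since `H_{m+1}(w) e^{-w²} = -(H_m(w) e^{-w²})'`,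
integrating by parts `m` times moves `H_m` onto the other factor as an `m`-th derivative, and
`(d/dw)^m H_n((w - b)/a) = (2/a)^m n!/(n-m)! · H_{n-m}((w - b)/a)`.
The remaining integrals `J_N = ∫ H_N((w - b)/a) e^{-w²} dw` satisfy, by one more integration by
parts, `J_{N+1} = x J_N + 2N y J_{N-1}` with `x = -2b/a`, `y = 1/a² - 1`; so does
`√π N! [t^N] exp(x t + y t²)`, which is the sum in the statement.
-/

open Polynomial

noncomputable def physHermitePoly : ℕ → ℝ[X]
  | 0 => 1
  | 1 => C 2 * X
  | (n + 2) => C 2 * X * physHermitePoly (n + 1) - C (2 * ((n : ℝ) + 1)) * physHermitePoly n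

@[simp]
theorem physHermitePoly_eval : ∀ (n : ℕ) (x : ℝ), (physHermitePoly n).eval x = physHermite n x
  | 0, _ => by simp [physHermitePoly, physHermite]
  | 1, _ => by simp [physHermitePoly, physHermite]
  | n + 2, x => by
      simp [physHermitePoly, physHermite, physHermitePoly_eval (n + 1), physHermitePoly_eval n]

theorem physHermitePoly_succ (n : ℕ) :
    physHermitePoly (n + 1)
      = C 2 * X * physHermitePoly n - C (2 * (n : ℝ)) * physHermitePoly (n - 1) := by
  cases n with
  | zero => simp [physHermitePoly]
  | succ n => rw [physHermitePoly]; push_cast; rfl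

theorem derivative_physHermitePoly : ∀ n : ℕ,
    derivative (physHermitePoly n) = C (2 * (n : ℝ)) * physHermitePoly (n - 1)
  | 0 => by simp [physHermitePoly]
  | 1 => by simp [physHermitePoly]
  | n + 2 => by
      rw [physHermitePoly, derivative_sub, derivative_mul, derivative_mul,
        derivative_physHermitePoly (n + 1), derivative_C_mul, derivative_physHermitePoly n,
        show n + 2 - 1 = n + 1 by omega, Nat.add_sub_cancel, physHermitePoly_succ n]
      simp only [derivative_C, derivative_X]
      simp only [map_mul, map_add, map_natCast, map_ofNat, map_one]
      push_cast
      ring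

theorem iterate_derivative_physHermitePoly (m n : ℕ) :
    derivative^[m] (physHermitePoly n)
      = C (2 ^ m * (n.descFactorial m : ℝ)) * physHermitePoly (n - m) := by
  induction m with
  | zero => simp
  | succ m ih =>
      rw [Function.iterate_succ_apply', ih, derivative_C_mul, derivative_physHermitePoly,
        Nat.descFactorial_succ, Nat.sub_sub, ← mul_assoc, ← C_mul]
      push_cast
      ring_nf

theorem iterate_derivative_comp_of_derivative_eq_C {R : Type*} [CommSemiring R] (p q : R[X])
    {c : R} (hq : derivative q = C c) (m : ℕ) :
    derivative^[m] (p.comp q) = C (c ^ m) * (derivative^[m] p).comp q := by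
  induction m with
  | zero => simp
  | succ m ih =>
      rw [Function.iterate_succ_apply', ih, derivative_C_mul, derivative_comp, hq,
        Function.iterate_succ_apply', pow_succ, C_mul]
      ring

theorem integrable_eval_mul_exp_neg_sq (p : ℝ[X]) :
    Integrable fun x : ℝ => p.eval x * Real.exp (-x ^ 2) := by
  induction p using Polynomial.induction_on' with
  | add p q hp hq =>
      simp only [eval_add, add_mul]
      exact hp.add hq
  | monomial k c =>
      have h := integrable_rpow_mul_exp_neg_mul_sq one_pos
        (by linarith [Nat.cast_nonneg (α := ℝ) k] : (-1 : ℝ) < k)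
      simpa [Real.rpow_natCast, mul_assoc] using h.const_mul c

noncomputable def gaussFunctional : ℝ[X] →ₗ[ℝ] ℝ where
  toFun p := ∫ x, p.eval x * Real.exp (-x ^ 2)
  map_add' p q := by
    simp only [eval_add, add_mul]
    exact integral_add (integrable_eval_mul_exp_neg_sq p)
      (integrable_eval_mul_exp_neg_sq q)
  map_smul' c p := by
    simp only [eval_smul, smul_eq_mul, mul_assoc, integral_const_mul,
      RingHom.id_apply]

theorem gaussFunctional_apply (p : ℝ[X]) :
    gaussFunctional p = ∫ x, p.eval x * Real.exp (-x ^ 2) := rfl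

theorem gaussFunctional_one : gaussFunctional 1 = √π := by
  simpa [gaussFunctional_apply] using integral_gaussian 1

theorem gaussFunctional_derivative (p : ℝ[X]) :
    gaussFunctional (derivative p) = gaussFunctional (C 2 * X * p) := by
  have hgauss : ∀ x : ℝ,
      HasDerivAt (fun y => Real.exp (-y ^ 2)) (-(2 * x) * Real.exp (-x ^ 2)) x :=
    fun x => by simpa [mul_comm] using ((hasDerivAt_pow 2 x).neg).exp
  have hparts := integral_mul_deriv_eq_deriv_mul_of_integrable
    (fun x _ => p.hasDerivAt x) (fun x _ => hgauss x)
    ((integrable_eval_mul_exp_neg_sq (-(C 2 * X * p))).congr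
      (.of_forall fun x => by simp; ring))
    (integrable_eval_mul_exp_neg_sq (derivative p)) (integrable_eval_mul_exp_neg_sq p)
  simp only [gaussFunctional_apply, eval_mul, eval_C, eval_X]
  rw [← neg_neg (∫ x, _ * _), ← hparts, ← integral_neg]
  congr 1 with x
  ring

theorem physHermitePoly_succ_eq_sub_derivative (n : ℕ) :
    physHermitePoly (n + 1) = C 2 * X * physHermitePoly n - derivative (physHermitePoly n) := by
  rw [derivative_physHermitePoly, physHermitePoly_succ]

theorem gaussFunctional_physHermitePoly_succ_mul (m : ℕ) (q : ℝ[X]) :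
    gaussFunctional (physHermitePoly (m + 1) * q)
      = gaussFunctional (physHermitePoly m * derivative q) := by
  have h := gaussFunctional_derivative (physHermitePoly m * q)
  rw [derivative_mul, map_add] at h
  rw [physHermitePoly_succ_eq_sub_derivative, sub_mul, map_sub, mul_assoc, ← h]
  ring

theorem gaussFunctional_physHermitePoly_mul (m : ℕ) (q : ℝ[X]) :
    gaussFunctional (physHermitePoly m * q) = gaussFunctional (derivative^[m] q) := by
  induction m generalizing q with
  | zero => simp [physHermitePoly]
  | succ m ih =>
      rw [gaussFunctional_physHermitePoly_succ_mul, ih, Function.iterate_succ_apply]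

theorem gaussFunctional_physHermitePoly_mul_comp (m n : ℕ) {ℓ : ℝ[X]} {c : ℝ}
    (hℓ : derivative ℓ = C c) :
    gaussFunctional (physHermitePoly m * (physHermitePoly n).comp ℓ)
      = (2 * c) ^ m * n.descFactorial m * gaussFunctional ((physHermitePoly (n - m)).comp ℓ) := by
  rw [gaussFunctional_physHermitePoly_mul, iterate_derivative_comp_of_derivative_eq_C _ _ hℓ,
    iterate_derivative_physHermitePoly, mul_comp, C_comp, ← mul_assoc, ← C_mul,
    ← smul_eq_C_mul, map_smul, smul_eq_mul, mul_pow]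
  ring

theorem gaussFunctional_physHermitePoly_comp_succ (N : ℕ) (c d : ℝ) :
    gaussFunctional ((physHermitePoly (N + 1)).comp (C c * X + C d))
      = 2 * d * gaussFunctional ((physHermitePoly N).comp (C c * X + C d))
        + 2 * N * (c ^ 2 - 1)
          * gaussFunctional ((physHermitePoly (N - 1)).comp (C c * X + C d)) := by
  set ℓ := C c * X + C d
  have hℓ : derivative ℓ = C c := by simp [ℓ]
  have hX : gaussFunctional (C 2 * X * (physHermitePoly N).comp ℓ)
      = 2 * N * c * gaussFunctional ((physHermitePoly (N - 1)).comp ℓ) := by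
    rw [← gaussFunctional_derivative, derivative_comp, hℓ, derivative_physHermitePoly, mul_comp,
      C_comp, ← mul_assoc, ← C_mul, ← smul_eq_C_mul, map_smul, smul_eq_mul]
    ring
  have hsplit : (physHermitePoly (N + 1)).comp ℓ
      = c • (C 2 * X * (physHermitePoly N).comp ℓ) + (2 * d) • (physHermitePoly N).comp ℓ
        - (2 * N : ℝ) • (physHermitePoly (N - 1)).comp ℓ := by
    simp only [physHermitePoly_succ, sub_comp, mul_comp, C_comp, X_comp, smul_eq_C_mul, ℓ]
    simp only [map_mul, map_ofNat]
    ring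
  rw [hsplit, map_sub, map_add, map_smul, map_smul, map_smul, hX, smul_eq_mul, smul_eq_mul,
    smul_eq_mul]
  ring

section ExpQuad

variable {K : Type*} [Field K]

/-- `expQuadCoeff x y N` is the coefficient of `t^N` in `exp (x t + y t²)`; `expQuadTerm x y j k`
is the contribution of `(x t)^j / j! · (y t²)^(k/2) / (k/2)!`. -/
noncomputable def expQuadTerm (x y : K) (j k : ℕ) : K :=
  if Even k then ((j.factorial : K) * ((k / 2).factorial : K))⁻¹ * x ^ j * y ^ (k / 2) else 0

noncomputable def expQuadCoeff (x y : K) (N : ℕ) : K :=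
  ∑ p ∈ antidiagonal N, expQuadTerm x y p.1 p.2

theorem succ_mul_expQuadTerm_succ_left [CharZero K] (x y : K) (j k : ℕ) :
    (j + 1 : K) * expQuadTerm x y (j + 1) k = x * expQuadTerm x y j k := by
  unfold expQuadTerm
  split_ifs
  · rw [Nat.factorial_succ]
    push_cast
    field_simp
    ring
  · ring

theorem add_two_mul_expQuadTerm_add_two_right [CharZero K] (x y : K) (j k : ℕ) :
    (k + 2 : K) * expQuadTerm x y j (k + 2) = 2 * y * expQuadTerm x y j k := by
  rcases Nat.even_or_odd' k with ⟨i, rfl | rfl⟩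
  · have hdiv : (2 * i + 2) / 2 = i + 1 := by omega
    simp only [expQuadTerm, even_two_mul, Nat.even_add, even_two, if_true, hdiv,
      Nat.mul_div_cancel_left i two_pos, Nat.factorial_succ]
    push_cast
    field_simp
    ring
  · simp [expQuadTerm, Nat.even_add_one, parity_simps]

theorem expQuadTerm_one_right (x y : K) (j : ℕ) : expQuadTerm x y j 1 = 0 := by
  simp [expQuadTerm]

theorem add_two_mul_expQuadCoeff_add_two [CharZero K] (x y : K) (N : ℕ) :
    (N + 2 : K) * expQuadCoeff x y (N + 2)
      = x * expQuadCoeff x y (N + 1) + 2 * y * expQuadCoeff x y N := by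
  have hsplit : (N + 2 : K) * expQuadCoeff x y (N + 2)
      = ∑ p ∈ antidiagonal (N + 2), (p.1 : K) * expQuadTerm x y p.1 p.2
        + ∑ p ∈ antidiagonal (N + 2), (p.2 : K) * expQuadTerm x y p.1 p.2 := by
    rw [expQuadCoeff, mul_sum, ← sum_add_distrib]
    refine sum_congr rfl fun p hp => ?_
    rw [← add_mul, ← Nat.cast_add, mem_antidiagonal.mp hp]
    push_cast
    ring
  have hleft : ∑ p ∈ antidiagonal (N + 2), (p.1 : K) * expQuadTerm x y p.1 p.2
      = x * expQuadCoeff x y (N + 1) := by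
    rw [Nat.sum_antidiagonal_succ, expQuadCoeff, mul_sum]
    push_cast
    simp only [succ_mul_expQuadTerm_succ_left, zero_mul, zero_add]
  have hright : ∑ p ∈ antidiagonal (N + 2), (p.2 : K) * expQuadTerm x y p.1 p.2
      = 2 * y * expQuadCoeff x y N := by
    rw [Nat.sum_antidiagonal_succ', Nat.sum_antidiagonal_succ', expQuadCoeff, mul_sum]
    push_cast
    simp only [expQuadTerm_one_right, add_assoc, one_add_one_eq_two,
      add_two_mul_expQuadTerm_add_two_right]
    simp
  rw [hsplit, hleft, hright]

theorem sum_filter_Icc_eq_expQuadCoeff (x y : K) {m n : ℕ} (hmn : m ≤ n) :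
    ∑ k ∈ (Icc m n).filter (fun k => Even (k - m)),
        (((n - k).factorial : K) * (((k - m) / 2).factorial : K))⁻¹ * x ^ (n - k)
          * y ^ ((k - m) / 2)
      = expQuadCoeff x y (n - m) := by
  rw [expQuadCoeff, ← Nat.sum_antidiagonal_swap, Nat.sum_antidiagonal_eq_sum_range_succ_mk,
    sum_filter, ← Ico_add_one_right_eq_Icc, sum_Ico_eq_sum_range, Nat.sub_add_comm hmn]
  refine sum_congr rfl fun k _ => ?_
  simp only [Prod.swap_prod_mk, expQuadTerm, Nat.add_sub_cancel_left, Nat.sub_add_eq]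

theorem expQuadCoeff_zero (x y : K) : expQuadCoeff x y 0 = 1 := by
  simp [expQuadCoeff, expQuadTerm]

theorem expQuadCoeff_one (x y : K) : expQuadCoeff x y 1 = x := by
  simp [expQuadCoeff, Nat.sum_antidiagonal_succ, expQuadTerm]

end ExpQuad

theorem gaussFunctional_physHermitePoly_comp (c d : ℝ) : ∀ N : ℕ,
    gaussFunctional ((physHermitePoly N).comp (C c * X + C d))
      = √π * N.factorial * expQuadCoeff (2 * d) (c ^ 2 - 1) N
  | 0 => by simp [physHermitePoly, gaussFunctional_one, expQuadCoeff_zero]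
  | 1 => by
      rw [gaussFunctional_physHermitePoly_comp_succ, gaussFunctional_physHermitePoly_comp c d 0,
        expQuadCoeff_zero, expQuadCoeff_one]
      simp
      ring
  | N + 2 => by
      rw [gaussFunctional_physHermitePoly_comp_succ, Nat.add_sub_cancel,
        gaussFunctional_physHermitePoly_comp c d (N + 1),
        gaussFunctional_physHermitePoly_comp c d N,
        Nat.factorial_succ (N + 1), Nat.factorial_succ N]
      push_cast
      linear_combination (-(√π * N.factorial * (N + 1))) *
        add_two_mul_expQuadCoeff_add_two (2 * d) (c ^ 2 - 1) N

theorem awHermite_mul_hermiteWeight (α u : ℝ) (n : ℕ) (v : ℝ) :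
    awHermite α u n v * hermiteWeight α u v
      = (√(2 ^ n * n.factorial))⁻¹ * α⁻¹ * physHermite n ((v - u) / α) := by
  have hexp : Real.exp (-((v - u) / α) ^ 2) * Real.exp (((v - u) / α) ^ 2) = 1 := by
    rw [← Real.exp_add, neg_add_cancel, Real.exp_zero]
  have hconst : (√(π * 2 ^ n * n.factorial))⁻¹ * √π = (√(2 ^ n * n.factorial))⁻¹ := by
    rw [mul_assoc π, Real.sqrt_mul pi_nonneg]
    field_simp
  calc awHermite α u n v * hermiteWeight α u v
      = (√(π * 2 ^ n * n.factorial))⁻¹ * √π * α⁻¹ * physHermite n ((v - u) / α)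
          * (Real.exp (-((v - u) / α) ^ 2) * Real.exp (((v - u) / α) ^ 2)) := by
        rw [awHermite, hermiteWeight]
        ring
    _ = _ := by rw [hexp, hconst, mul_one]

theorem integral_eq_mul_integral_comp_mul_add (f : ℝ → ℝ) {c : ℝ} (hc : 0 < c) (d : ℝ) :
    ∫ v, f v = c * ∫ w, f (c * w + d) := by
  have h := Measure.integral_comp_mul_left (fun x => f (x + d)) c
  rw [integral_add_right_eq_self f d, abs_of_pos (inv_pos.mpr hc), smul_eq_mul] at h
  rw [h, ← mul_assoc, mul_inv_cancel₀ hc.ne', one_mul]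

theorem integral_awHermite_mul_physHermite {α' : ℝ} (hα' : 0 < α') (α u' u : ℝ)
    (m n : ℕ) :
    ∫ v, awHermite α' u' m v * physHermite n ((v - u) / α)
      = α' * (√(π * 2 ^ m * m.factorial))⁻¹ *
        gaussFunctional
          (physHermitePoly m * (physHermitePoly n).comp (C (α' / α) * X + C ((u' - u) / α))) := by
  rw [integral_eq_mul_integral_comp_mul_add _ hα' u', gaussFunctional_apply, mul_assoc]
  congr 1
  rw [← integral_const_mul]
  refine integral_congr_ae (.of_forall fun w => ?_)
  simp only [awHermite, eval_mul, eval_comp, physHermitePoly_eval, eval_add, eval_C, eval_X,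
    add_sub_cancel_right, mul_div_cancel_left₀ w hα'.ne']
  rw [show (α' * w + u' - u) / α = α' / α * w + (u' - u) / α by ring]
  ring

theorem sqrt_pow_of_nonneg {x : ℝ} (hx : 0 ≤ x) (k : ℕ) : √(x ^ k) = √x ^ k := by
  rw [← Real.sqrt_sq (pow_nonneg (Real.sqrt_nonneg x) k), ← pow_mul, mul_comm, pow_mul,
    Real.sq_sqrt hx]

theorem Kcoef_eq (n m : ℕ) :
    Kcoef n m = 2 ^ m * n.factorial / (√(2 ^ n * n.factorial) * √(2 ^ m * m.factorial)) := by
  have h2 : (2 : ℝ) ^ (((m : ℝ) - n) / 2) = √2 ^ m / √2 ^ n := by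
    rw [Real.sqrt_eq_rpow, ← Real.rpow_natCast, ← Real.rpow_natCast,
      ← Real.rpow_mul two_pos.le, ← Real.rpow_mul two_pos.le, ← Real.rpow_sub two_pos]
    ring_nf
  have hn : (0 : ℝ) < n.factorial := by positivity
  rw [Kcoef, h2, Real.sqrt_mul (by positivity), Real.sqrt_mul (by positivity),
    sqrt_pow_of_nonneg two_pos.le, sqrt_pow_of_nonneg two_pos.le]
  field_simp
  rw [← pow_mul, mul_comm m, pow_mul, Real.sq_sqrt two_pos.le, Real.sq_sqrt hn.le]

theorem transferMatrix_eq_integral (α' u' α u : ℝ) (n m : ℕ) :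
    transferMatrix α' u' α u n m
      = (√(2 ^ n * n.factorial))⁻¹ * α⁻¹
        * ∫ v, awHermite α' u' m v * physHermite n ((v - u) / α) := by
  rw [transferMatrix, ← integral_const_mul]
  congr 1 with v
  rw [mul_assoc, awHermite_mul_hermiteWeight]
  ring

theorem transferMatrix_general_case_general (α' α u' u : ℝ) (hα' : 0 < α') (hα : 0 < α)
    (a b : ℝ) (ha : a = α / α') (hb : b = (u - u') / α')
    (n m : ℕ) (hnm : m ≤ n) :
    transferMatrix α' u' α u n m
      = Kcoef n m * (a ^ (m + 1))⁻¹ *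
        ∑ k ∈ (Finset.Icc m n).filter (fun k => Even (k - m)),
          (((n - k).factorial : ℝ) * (((k - m) / 2).factorial : ℝ))⁻¹ *
            (-(2 * b) / a) ^ (n - k) * (1 / a ^ 2 - 1) ^ ((k - m) / 2) := by
  have hα0 := hα.ne'
  have hα'0 := hα'.ne'
  have hx : 2 * ((u' - u) / α) = -(2 * b) / a := by
    rw [ha, hb]
    field_simp
    ring
  have hy : (α' / α) ^ 2 - 1 = 1 / a ^ 2 - 1 := by
    rw [ha]
    field_simp
  have hfact : ((n - m).factorial : ℝ) * n.descFactorial m = n.factorial := by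
    exact_mod_cast Nat.factorial_mul_descFactorial hnm
  rw [transferMatrix_eq_integral, integral_awHermite_mul_physHermite hα',
    gaussFunctional_physHermitePoly_mul_comp m n (c := α' / α) (by simp),
    gaussFunctional_physHermitePoly_comp, hx, hy, sum_filter_Icc_eq_expQuadCoeff _ _ hnm, Kcoef_eq,
    mul_assoc π, Real.sqrt_mul pi_nonneg, ha]
  generalize expQuadCoeff (K := ℝ) _ _ _ = S
  have hsn : 0 < √(2 ^ n * n.factorial : ℝ) := by positivity
  have hsm : 0 < √(2 ^ m * m.factorial : ℝ) := by positivity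
  have hsπ : 0 < √π := by positivity
  field_simp
  rw [← hfact, div_pow, div_pow, mul_pow]
  field_simp
  ring

/-- Explicit formula for the transformation matrix, general case
(`α ≠ α'` and `u ≠ u'`). -/
theorem transferMatrix_general_case (α' α u' u : ℝ) (hα' : 0 < α') (hα : 0 < α)
    (hαne : α ≠ α') (hune : u ≠ u') (a b : ℝ) (ha : a = α / α') (hb : b = (u - u') / α')
    (n m : ℕ) (hnm : m ≤ n) :
    transferMatrix α' u' α u n m
      = Kcoef n m * (a ^ (m + 1))⁻¹ *
        ∑ k ∈ (Finset.Icc m n).filter (fun k => Even (k - m)),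
          (((n - k).factorial : ℝ) * (((k - m) / 2).factorial : ℝ))⁻¹ *
            (-(2 * b) / a) ^ (n - k) * (1 / a ^ 2 - 1) ^ ((k - m) / 2) :=
  transferMatrix_general_case_general α' α u' u hα' hα a b ha hb n m hnm
end

section
/- Physics-based update formula for the Hermite shift parameter: Let N ∈ ℕ with N ≥ 1, α > 0, u ∈ ℝ, and let c_0, …, c_N be real numbers with c_0 ≠ 0. Define f(v) := Σ_{m=0}^N c_m·ψ_m^{α,u}(v). Then ∫_ℝ f(v) dv = α·c_0 ≠ 0 and (∫_ℝ v·f(v) dv)/(∫_ℝ f(v) dv) = u + (α/√2)·(c_1/c_0). -/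
/-!
After the substitution `x = (v - u) / α`, the mass and the first moment of `ψ_n^{α,u}` reduce to
`∫ H_n(x) e^{-x²} dx` and `∫ x H_n(x) e^{-x²} dx`. The first vanishes for `n ≥ 1` because
`H_n e^{-x²} = -(H_{n-1} e^{-x²})'`, and the recurrence `2x H_n = H_{n+1} + 2n H_{n-1}`
turns the second into a combination of the first, leaving only `n = 1`. Hence only `c_0` carries
mass and only `c_0, c_1` contribute to the first moment.
-/

open MeasureTheory Real Finset

@[simp] lemma physHermite_zero (x : ℝ) : physHermite 0 x = 1 := rfl

@[simp] lemma physHermite_one (x : ℝ) : physHermite 1 x = 2 * x := rfl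

lemma physHermite_add_two (n : ℕ) (x : ℝ) :
    physHermite (n + 2) x = 2 * x * physHermite (n + 1) x - 2 * ((n : ℝ) + 1) * physHermite n x :=
  rfl

/-- At `n = 0` the truncated index `0 - 1 = 0` is harmless: its coefficient `2 * n` vanishes. -/
lemma two_mul_mul_physHermite (n : ℕ) (x : ℝ) :
    2 * x * physHermite n x = physHermite (n + 1) x + 2 * n * physHermite (n - 1) x := by
  cases n with
  | zero => simp
  | succ n => rw [physHermite_add_two]; push_cast; ring

lemma hasDerivAt_physHermite (n : ℕ) (x : ℝ) :
    HasDerivAt (physHermite n) (2 * n * physHermite (n - 1) x) x := by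
  induction n using Nat.twoStepInduction generalizing x with
  | zero =>
    show HasDerivAt (fun _ => (1 : ℝ)) _ x
    simpa using hasDerivAt_const x (1 : ℝ)
  | one =>
    show HasDerivAt (fun y => 2 * y) _ x
    simpa using (hasDerivAt_id x).const_mul (2 : ℝ)
  | more n ih₀ ih₁ =>
    have hrec : physHermite (n + 2) = fun y => 2 * y * physHermite (n + 1) y
        - 2 * ((n : ℝ) + 1) * physHermite n y := funext (physHermite_add_two n)
    rw [hrec]
    refine ((((hasDerivAt_id x).const_mul 2).mul (ih₁ x)).sub
      ((ih₀ x).const_mul (2 * ((n : ℝ) + 1)))).congr_deriv ?_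
    have := two_mul_mul_physHermite n x
    simp only [Nat.add_sub_cancel, id] at this ⊢
    push_cast
    linear_combination 2 * ((n : ℝ) + 1) * this

noncomputable def hermiteGaussian (n : ℕ) (x : ℝ) : ℝ := physHermite n x * exp (-x ^ 2)

lemma integrable_pow_mul_exp_neg_sq (k : ℕ) : Integrable fun x : ℝ => x ^ k * exp (-x ^ 2) := by
  simpa using
    integrable_rpow_mul_exp_neg_mul_sq one_pos (s := k) (neg_one_lt_zero.trans_le k.cast_nonneg)

lemma integrable_pow_mul_hermiteGaussian (k n : ℕ) :
    Integrable fun x => x ^ k * hermiteGaussian n x := by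
  induction n using Nat.twoStepInduction generalizing k with
  | zero => simpa [hermiteGaussian] using integrable_pow_mul_exp_neg_sq k
  | one =>
    refine ((integrable_pow_mul_exp_neg_sq (k + 1)).const_mul 2).congr (ae_of_all _ fun x => ?_)
    simp only [hermiteGaussian, physHermite_one]; ring
  | more n ih₀ ih₁ =>
    refine (((ih₁ (k + 1)).const_mul 2).sub ((ih₀ k).const_mul (2 * ((n : ℝ) + 1)))).congr
      (ae_of_all _ fun x => ?_)
    simp only [hermiteGaussian, physHermite_add_two, Pi.sub_apply]; ring

lemma integrable_hermiteGaussian (n : ℕ) : Integrable (hermiteGaussian n) := by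
  simpa using integrable_pow_mul_hermiteGaussian 0 n

lemma integrable_mul_hermiteGaussian (n : ℕ) :
    Integrable fun x => x * hermiteGaussian n x := by
  simpa using integrable_pow_mul_hermiteGaussian 1 n

lemma hasDerivAt_hermiteGaussian (n : ℕ) (x : ℝ) :
    HasDerivAt (hermiteGaussian n) (-hermiteGaussian (n + 1) x) x := by
  have hexp : HasDerivAt (fun y : ℝ => exp (-y ^ 2)) (-(2 * x) * exp (-x ^ 2)) x := by
    simpa [mul_comm] using ((hasDerivAt_pow 2 x).neg).exp
  refine ((hasDerivAt_physHermite n x).mul hexp).congr_deriv ?_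
  simp only [hermiteGaussian]
  linear_combination -exp (-x ^ 2) * two_mul_mul_physHermite n x

lemma integral_hermiteGaussian (n : ℕ) :
    ∫ x, hermiteGaussian n x = if n = 0 then √π else 0 := by
  cases n with
  | zero => simpa [hermiteGaussian] using integral_gaussian 1
  | succ n =>
    simpa [integral_neg] using integral_eq_zero_of_hasDerivAt_of_integrable
      (hasDerivAt_hermiteGaussian n) (integrable_hermiteGaussian (n + 1)).neg
      (integrable_hermiteGaussian n)

lemma integral_mul_hermiteGaussian (n : ℕ) :
    ∫ x, x * hermiteGaussian n x = if n = 1 then √π else 0 := by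
  have hrec : (fun x => x * hermiteGaussian n x) =
      fun x => (hermiteGaussian (n + 1) x + 2 * n * hermiteGaussian (n - 1) x) / 2 := by
    ext x
    simp only [hermiteGaussian]
    linear_combination exp (-x ^ 2) / 2 * two_mul_mul_physHermite n x
  rw [hrec, integral_div, integral_add (integrable_hermiteGaussian _)
    ((integrable_hermiteGaussian _).const_mul _), integral_const_mul,
    integral_hermiteGaussian, integral_hermiteGaussian]
  rcases n with _ | _ | n <;> simp

lemma integral_comp_sub_div {E : Type*} [NormedAddCommGroup E] [NormedSpace ℝ E] (g : ℝ → E)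
    (u α : ℝ) : ∫ v, g ((v - u) / α) = |α| • ∫ x, g x := by
  rw [integral_sub_right_eq_self (fun w => g (w / α)) u, Measure.integral_comp_div]

lemma MeasureTheory.Integrable.comp_sub_div {E : Type*} [NormedAddCommGroup E] {g : ℝ → E}
    (hg : Integrable g) (u : ℝ) {α : ℝ} (hα : α ≠ 0) :
    Integrable fun v => g ((v - u) / α) :=
  ((integrable_comp_div_iff g hα).mpr hg).comp_sub_right u

section awHermite

variable {α u : ℝ}

lemma awHermite_eq (n : ℕ) (v : ℝ) : awHermite α u n v =
    (√(π * 2 ^ n * n.factorial))⁻¹ * hermiteGaussian n ((v - u) / α) := by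
  rw [awHermite, hermiteGaussian, mul_assoc]

lemma mul_awHermite_eq (hα : α ≠ 0) (n : ℕ) (v : ℝ) : v * awHermite α u n v =
    (√(π * 2 ^ n * n.factorial))⁻¹ *
      ((α * ((v - u) / α) + u) * hermiteGaussian n ((v - u) / α)) := by
  rw [awHermite_eq, mul_div_cancel₀ _ hα, sub_add_cancel, mul_left_comm]

lemma integrable_awHermite (hα : α ≠ 0) (n : ℕ) : Integrable (awHermite α u n) := by
  simp_rw [funext (awHermite_eq n)]
  exact ((integrable_hermiteGaussian n).comp_sub_div u hα).const_mul _

lemma integrable_mul_awHermite (hα : α ≠ 0) (n : ℕ) :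
    Integrable fun v => v * awHermite α u n v := by
  simp_rw [mul_awHermite_eq hα]
  have hG : Integrable fun x => (α * x + u) * hermiteGaussian n x := by
    simp_rw [add_mul, mul_assoc]
    exact ((integrable_mul_hermiteGaussian n).const_mul α).add
      ((integrable_hermiteGaussian n).const_mul u)
  exact (hG.comp_sub_div u hα).const_mul _

lemma integral_awHermite (n : ℕ) :
    ∫ v, awHermite α u n v = if n = 0 then |α| else 0 := by
  simp_rw [awHermite_eq, integral_const_mul, integral_comp_sub_div, integral_hermiteGaussian]
  rcases n with _ | n
  · field_simp
    simp [mul_comm]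
  · simp

lemma integral_mul_awHermite (hα : α ≠ 0) (n : ℕ) :
    ∫ v, v * awHermite α u n v =
      |α| * ((if n = 0 then u else 0) + if n = 1 then α / √2 else 0) := by
  simp_rw [mul_awHermite_eq hα, integral_const_mul,
    integral_comp_sub_div (fun x => (α * x + u) * hermiteGaussian n x), smul_eq_mul, add_mul,
    mul_assoc]
  rw [integral_add ((integrable_mul_hermiteGaussian n).const_mul α)
      ((integrable_hermiteGaussian n).const_mul u), integral_const_mul, integral_const_mul,
    integral_mul_hermiteGaussian, integral_hermiteGaussian]
  rcases n with _ | _ | n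
  · field_simp
    simp [mul_comm]
  · field_simp
    simp [sqrt_mul pi_pos.le 2]
    field_simp
  · simp

variable {c : ℕ → ℝ} {N : ℕ}

lemma integral_sum_awHermite (hα : α ≠ 0) :
    ∫ v, ∑ m ∈ range (N + 1), c m * awHermite α u m v = |α| * c 0 := by
  rw [integral_finsetSum _ fun m _ => ((integrable_awHermite hα m).const_mul _)]
  simp [integral_const_mul, integral_awHermite, mul_comm]

lemma integral_mul_sum_awHermite (hα : α ≠ 0) (hN : 0 < N) :
    ∫ v, v * ∑ m ∈ range (N + 1), c m * awHermite α u m v =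
      |α| * (c 0 * u + c 1 * (α / √2)) := by
  simp_rw [mul_sum, mul_left_comm _ (c _)]
  rw [integral_finsetSum _ fun m _ => ((integrable_mul_awHermite hα m).const_mul _)]
  simp [integral_const_mul, integral_mul_awHermite hα, mul_add, sum_add_distrib, hN]
  ring

end awHermite

/-- Physics-based update formula for the Hermite shift parameter. -/
theorem hermite_shift_update (N : ℕ) (hN : 1 ≤ N) (α u : ℝ) (hα : 0 < α)
    (c : ℕ → ℝ) (hc0 : c 0 ≠ 0) (f : ℝ → ℝ)
    (hf : ∀ v : ℝ, f v = ∑ m ∈ Finset.range (N + 1), c m * awHermite α u m v) :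
    (∫ v : ℝ, f v) = α * c 0 ∧ (∫ v : ℝ, f v) ≠ 0 ∧
    (∫ v : ℝ, v * f v) / (∫ v : ℝ, f v) = u + α / Real.sqrt 2 * (c 1 / c 0) := by
  have hmass : ∫ v, f v = α * c 0 := by
    simp_rw [hf, integral_sum_awHermite hα.ne', abs_of_pos hα]
  have hmoment : ∫ v, v * f v = α * (c 0 * u + c 1 * (α / √2)) := by
    simp_rw [hf, integral_mul_sum_awHermite hα.ne' hN, abs_of_pos hα]
  have hmass_ne : α * c 0 ≠ 0 := mul_ne_zero hα.ne' hc0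
  refine ⟨hmass, hmass ▸ hmass_ne, ?_⟩
  rw [hmoment, hmass]
  field_simp
end
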